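/- In the setting of the jump Markov process (X_{i+1} | X_i = x ∼ (1−p)δ_x + p·f_c with f_c(x) ≥ f_min > 0 on [0,1]), the quantity Ψ₁(b,g) = sup_{x,z} K^g(x,z)/π(z) satisfies Ψ₁(b,g) ≤ (1 − (1−p)^g) + (1−p)^g·2^b / f_min. In particular, if b = b_n = ⌈r log₂log₂ n⌉ and g = g_n = ⌊γ r log₂log₂ n⌋ with γ > −1/log₂(1−p), then Ψ₁(b_n, g_n) → 1 as n → ∞. -/

import Mathlib

/-!
After `g` steps the jump chain has either never jumped (probability `(1-p)^g`) or has last been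
redrawn from `ν`, so `K^g(x,·) = (1-p)^g δ_x + (1-(1-p)^g) ν`; the same one-step computation
shows that `ν` is the only stationary law. A cell of the `2^{-b}`-grid inside `[0,1]` has
`ν`-mass at least `f_min 2^{-b}`, which bounds every ratio `K^g(x,z)/π(z)` by
`(1-(1-p)^g) + (1-p)^g 2^b / f_min`, while `x = z = 0` shows `Ψ₁ ≥ 1-(1-p)^g`. Along the given
sequences, with `A_n = r log₂ log₂ n → ∞`, the error `(1-p)^{g_n} 2^{b_n}` is at most
`exp (A_n (γ log(1-p) + log 2) + O(1))`, and the bracket is negative exactly when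
`γ > -1/log₂(1-p)`.
-/

open MeasureTheory ProbabilityTheory Classical Filter

/-- `b`-bit quantization `[x]_b = ⌊x·2^b⌋/2^b`. -/
noncomputable def quant (b : ℕ) (x : ℝ) : ℝ := ⌊x * 2 ^ b⌋ / 2 ^ b

/-- `g`-step iterate of a Markov kernel. -/
noncomputable def iterK (K : Kernel ℝ ℝ) : ℕ → Kernel ℝ ℝ
  | 0 => Kernel.id
  | (g + 1) => (iterK K g).comp K

/-- `Ψ₁(b,g) = sup_{x ∈ [0,1], z ∈ X_b} K^g(x,z)/π(z)`. -/
noncomputable def Psi1 (K : Kernel ℝ ℝ) (π : Measure ℝ) (b g : ℕ) : ℝ :=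
  sSup {r : ℝ | ∃ x ∈ Set.Icc (0 : ℝ) 1, ∃ z ∈ quant b '' Set.Icc (0 : ℝ) 1,
    r = (iterK K g x {y | quant b y = z}).toReal / (π {y | quant b y = z}).toReal}

open Set
open scoped ENNReal

lemma lintegral_mul_dirac_apply_add {α : Type*} [MeasurableSpace α] {μ : Measure α}
    [IsProbabilityMeasure μ] {s : Set α} (hs : MeasurableSet s) (a c : ℝ≥0∞) :
    ∫⁻ y, a * Measure.dirac y s + c ∂μ = a * μ s + c := by
  simp_rw [Measure.dirac_apply' _ hs]
  rw [lintegral_add_right _ measurable_const, lintegral_const, measure_univ, mul_one,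
    lintegral_const_mul _ (measurable_one.indicator hs), lintegral_indicator_one hs]

def IsJumpKernel (K : Kernel ℝ ℝ) (p : ℝ) (ν : Measure ℝ) : Prop :=
  ∀ x, K x = ENNReal.ofReal (1 - p) • Measure.dirac x + ENNReal.ofReal p • ν

def IsDensityLowerBoundOn (ν : Measure ℝ) (fmin : ℝ) (I : Set ℝ) : Prop :=
  ∀ s, MeasurableSet s → s ⊆ I → ENNReal.ofReal fmin * volume s ≤ ν s

section JumpKernel

variable {p : ℝ} {ν : Measure ℝ} {K : Kernel ℝ ℝ}

lemma IsJumpKernel.apply (hK : IsJumpKernel K p ν) (x : ℝ) (s : Set ℝ) :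
    K x s = ENNReal.ofReal (1 - p) * Measure.dirac x s + ENNReal.ofReal p * ν s := by
  simp [hK x]

lemma IsJumpKernel.isMarkovKernel [IsProbabilityMeasure ν] (hK : IsJumpKernel K p ν)
    (hp0 : 0 ≤ p) (hp1 : p ≤ 1) : IsMarkovKernel K where
  isProbabilityMeasure x := ⟨by
    rw [hK.apply, measure_univ, measure_univ, mul_one, mul_one,
      ← ENNReal.ofReal_add (by linarith) hp0, sub_add_cancel, ENNReal.ofReal_one]⟩

lemma IsJumpKernel.bind_eq (hK : IsJumpKernel K p ν) (μ : Measure ℝ) [IsProbabilityMeasure μ] :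
    μ.bind K = ENNReal.ofReal (1 - p) • μ + ENNReal.ofReal p • ν := by
  ext s hs
  simp_rw [Measure.bind_apply hs K.aemeasurable, hK.apply, lintegral_mul_dirac_apply_add hs,
    Measure.add_apply, Measure.smul_apply, smul_eq_mul]

lemma IsJumpKernel.eq_of_invariant [IsProbabilityMeasure ν] (hK : IsJumpKernel K p ν)
    (hp0 : 0 < p) (hp1 : p ≤ 1) {π : Measure ℝ} [IsProbabilityMeasure π]
    (hπ : K.Invariant π) : π = ν := by
  ext s hs
  have hmix := congrArg (· s) ((hK.bind_eq π).symm.trans hπ.def)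
  simp only [Measure.add_apply, Measure.smul_apply, smul_eq_mul] at hmix
  have hsplit : π s = ENNReal.ofReal (1 - p) * π s + ENNReal.ofReal p * π s := by
    rw [← add_mul, ← ENNReal.ofReal_add (by linarith) hp0.le, sub_add_cancel,
      ENNReal.ofReal_one, one_mul]
  have hcancel : ENNReal.ofReal p * ν s = ENNReal.ofReal p * π s :=
    (ENNReal.add_right_inj (by finiteness)).mp (hmix.trans hsplit)
  exact ((ENNReal.mul_right_inj (by simpa using hp0) ENNReal.ofReal_ne_top).mp hcancel).symm

lemma IsJumpKernel.iterK_eq [IsProbabilityMeasure ν] (hK : IsJumpKernel K p ν)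
    (hp0 : 0 ≤ p) (hp1 : p ≤ 1) (g : ℕ) (x : ℝ) :
    iterK K g x = ENNReal.ofReal ((1 - p) ^ g) • Measure.dirac x
      + ENNReal.ofReal (1 - (1 - p) ^ g) • ν := by
  have := hK.isMarkovKernel hp0 hp1
  induction g generalizing x with
  | zero => simp [iterK, Kernel.id_apply]
  | succ g ih =>
    ext s hs
    have hq : 0 ≤ 1 - p := by linarith
    have hqg : (1 - p) ^ g ≤ 1 := pow_le_one₀ hq (by linarith)
    have hstay : ENNReal.ofReal ((1 - p) ^ g) * ENNReal.ofReal (1 - p)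
        = ENNReal.ofReal ((1 - p) ^ (g + 1)) := by
      rw [← ENNReal.ofReal_mul (by positivity), pow_succ]
    have hjump : ENNReal.ofReal ((1 - p) ^ g) * ENNReal.ofReal p
        + ENNReal.ofReal (1 - (1 - p) ^ g) = ENNReal.ofReal (1 - (1 - p) ^ (g + 1)) := by
      rw [← ENNReal.ofReal_mul (by positivity), ← ENNReal.ofReal_add (by positivity)
        (by linarith)]
      ring_nf
    simp_rw [iterK, Kernel.comp_apply' _ _ _ hs, ih, Measure.add_apply, Measure.smul_apply,
      smul_eq_mul, lintegral_mul_dirac_apply_add hs, hK.apply, mul_add, ← mul_assoc, hstay,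
      add_assoc, ← add_mul, hjump]

lemma IsJumpKernel.toReal_iterK_apply [IsProbabilityMeasure ν] (hK : IsJumpKernel K p ν)
    (hp0 : 0 ≤ p) (hp1 : p ≤ 1) (g : ℕ) (x : ℝ) (s : Set ℝ) :
    (iterK K g x s).toReal
      = (1 - p) ^ g * (Measure.dirac x s).toReal + (1 - (1 - p) ^ g) * (ν s).toReal := by
  have hq : 0 ≤ 1 - p := by linarith
  have hqg : (1 - p) ^ g ≤ 1 := pow_le_one₀ hq (by linarith)
  rw [hK.iterK_eq hp0 hp1, Measure.add_apply, Measure.smul_apply, Measure.smul_apply,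
    smul_eq_mul, smul_eq_mul, ENNReal.toReal_add (by finiteness) (by finiteness),
    ENNReal.toReal_mul, ENNReal.toReal_mul, ENNReal.toReal_ofReal (by positivity),
    ENNReal.toReal_ofReal (by linarith)]

end JumpKernel

section Quantization

variable {b : ℕ}

lemma setOf_quant_eq_quant (b : ℕ) (x₀ : ℝ) :
    {y | quant b y = quant b x₀}
      = Ico ((⌊x₀ * 2 ^ b⌋ : ℝ) / 2 ^ b) ((⌊x₀ * 2 ^ b⌋ + 1 : ℝ) / 2 ^ b) := by
  ext y
  simp only [quant, mem_ofPred_eq, mem_Ico, div_left_inj' (by positivity : (2 : ℝ) ^ b ≠ 0),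
    Int.cast_inj, Int.floor_eq_iff, div_le_iff₀ (by positivity : (0 : ℝ) < 2 ^ b),
    lt_div_iff₀ (by positivity : (0 : ℝ) < 2 ^ b)]

lemma measurableSet_setOf_quant_eq_quant (b : ℕ) (x₀ : ℝ) :
    MeasurableSet {y | quant b y = quant b x₀} := by
  rw [setOf_quant_eq_quant]
  exact measurableSet_Ico

lemma volume_setOf_quant_eq_quant (b : ℕ) (x₀ : ℝ) :
    volume {y | quant b y = quant b x₀} = ENNReal.ofReal (1 / 2 ^ b) := by
  rw [setOf_quant_eq_quant, Real.volume_Ico]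
  ring_nf

lemma setOf_quant_eq_quant_subset_Icc {x₀ : ℝ} (hx₀ : x₀ ∈ Ico 0 1) :
    {y | quant b y = quant b x₀} ⊆ Icc 0 1 := by
  have h2b : (0 : ℝ) < 2 ^ b := by positivity
  have hk0 : (0 : ℝ) ≤ ⌊x₀ * 2 ^ b⌋ := by
    exact_mod_cast Int.floor_nonneg.mpr (by nlinarith [hx₀.1])
  have hk1 : (⌊x₀ * 2 ^ b⌋ + 1 : ℝ) ≤ 2 ^ b := by
    have : ⌊x₀ * 2 ^ b⌋ < (2 : ℤ) ^ b :=
      Int.floor_lt.mpr (by push_cast; nlinarith [hx₀.2])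
    exact_mod_cast Int.add_one_le_iff.mpr this
  rw [setOf_quant_eq_quant]
  exact fun y hy => ⟨(div_nonneg hk0 h2b.le).trans hy.1,
    hy.2.le.trans ((div_le_one h2b).mpr hk1)⟩

lemma quant_le (b : ℕ) (y : ℝ) : quant b y ≤ y :=
  (div_le_iff₀ (by positivity)).mpr (Int.floor_le _)

lemma quant_one (b : ℕ) : quant b 1 = 1 := by
  have h : ⌊(2 : ℝ) ^ b⌋ = 2 ^ b := by exact_mod_cast Int.floor_natCast (2 ^ b)
  simp [quant, h]

variable {ν : Measure ℝ}

lemma IsDensityLowerBoundOn.ofReal_le_measure_setOf_quant_eq_quant {fmin : ℝ}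
    (hlb : IsDensityLowerBoundOn ν fmin (Icc 0 1)) {x₀ : ℝ} (hx₀ : x₀ ∈ Ico 0 1) :
    ENNReal.ofReal (fmin / 2 ^ b) ≤ ν {y | quant b y = quant b x₀} := by
  calc ENNReal.ofReal (fmin / 2 ^ b)
      = ENNReal.ofReal fmin * volume {y | quant b y = quant b x₀} := by
        rw [volume_setOf_quant_eq_quant, ← ENNReal.ofReal_mul' (by positivity), mul_one_div]
    _ ≤ ν {y | quant b y = quant b x₀} :=
        hlb _ (measurableSet_setOf_quant_eq_quant b x₀) (setOf_quant_eq_quant_subset_Icc hx₀)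

lemma measure_setOf_quant_eq_one [IsProbabilityMeasure ν] (hν : ν ≪ volume)
    (hν1 : ν (Icc 0 1) = 1) : ν {y | quant b y = quant b 1} = 0 := by
  refine measure_mono_null (fun y hy => ?_) (measure_union_null
    (hν (Real.volume_singleton (a := 1))) ((prob_compl_eq_zero_iff measurableSet_Icc).mpr hν1))
  have hy1 : 1 ≤ y := (quant_one b).symm.trans_le (hy.symm.trans_le (quant_le b y))
  rcases hy1.eq_or_lt with rfl | hy1
  · exact Or.inl rfl
  · exact Or.inr fun hy' => hy1.not_ge hy'.2

/-- The cell `[1, 1 + 2^{-b})` of the right endpoint is `ν`-null, and there the ratio in `Psi1`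
takes the junk value `0`. -/
lemma toReal_measure_setOf_quant_eq_quant_eq_zero_or_le [IsProbabilityMeasure ν]
    (hν : ν ≪ volume) (hν1 : ν (Icc 0 1) = 1) {fmin : ℝ}
    (hlb : IsDensityLowerBoundOn ν fmin (Icc 0 1)) {x₀ : ℝ} (hx₀ : x₀ ∈ Icc 0 1) :
    (ν {y | quant b y = quant b x₀}).toReal = 0
      ∨ fmin / 2 ^ b ≤ (ν {y | quant b y = quant b x₀}).toReal := by
  rcases hx₀.2.lt_or_eq with hx₀1 | rfl
  · exact Or.inr ((ENNReal.ofReal_le_iff_le_toReal (measure_ne_top _ _)).mp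
      (hlb.ofReal_le_measure_setOf_quant_eq_quant ⟨hx₀.1, hx₀1⟩))
  · exact Or.inl (by rw [measure_setOf_quant_eq_one hν hν1, ENNReal.toReal_zero])

end Quantization

section Psi1

variable {K : Kernel ℝ ℝ} {π : Measure ℝ} {b g : ℕ} {B : ℝ}

lemma Psi1_le_of_forall_le (hB : 0 ≤ B)
    (h : ∀ x ∈ Icc (0 : ℝ) 1, ∀ x₀ ∈ Icc (0 : ℝ) 1,
      (iterK K g x {y | quant b y = quant b x₀}).toReal
        / (π {y | quant b y = quant b x₀}).toReal ≤ B) :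
    Psi1 K π b g ≤ B := by
  refine Real.sSup_le ?_ hB
  rintro r ⟨x, hx, _, ⟨x₀, hx₀, rfl⟩, rfl⟩
  exact h x hx x₀ hx₀

lemma le_Psi1_of_forall_le (h : ∀ x ∈ Icc (0 : ℝ) 1, ∀ x₀ ∈ Icc (0 : ℝ) 1,
      (iterK K g x {y | quant b y = quant b x₀}).toReal
        / (π {y | quant b y = quant b x₀}).toReal ≤ B)
    {x x₀ : ℝ} (hx : x ∈ Icc 0 1) (hx₀ : x₀ ∈ Icc 0 1) :
    (iterK K g x {y | quant b y = quant b x₀}).toReal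
        / (π {y | quant b y = quant b x₀}).toReal ≤ Psi1 K π b g := by
  refine le_csSup ⟨B, ?_⟩ ⟨x, hx, _, ⟨x₀, hx₀, rfl⟩, rfl⟩
  rintro r ⟨x, hx, _, ⟨x₀, hx₀, rfl⟩, rfl⟩
  exact h x hx x₀ hx₀

end Psi1

lemma mul_add_one_sub_mul_div_le {c d m a : ℝ} (hc0 : 0 ≤ c) (hc1 : c ≤ 1) (hd1 : d ≤ 1)
    (ha : 0 < a) (hm : m = 0 ∨ a ≤ m) :
    (c * d + (1 - c) * m) / m ≤ 1 - c + c / a := by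
  rcases hm with rfl | ham
  · rw [div_zero]
    linarith [div_nonneg hc0 ha.le]
  · have hm : 0 < m := ha.trans_le ham
    calc (c * d + (1 - c) * m) / m = c * d / m + (1 - c) := by field_simp
      _ ≤ c / m + (1 - c) := by gcongr; exact mul_le_of_le_one_right hc0 hd1
      _ ≤ 1 - c + c / a := by rw [add_comm]; gcongr

section JumpPsi1

variable {p : ℝ} {ν : Measure ℝ} [IsProbabilityMeasure ν] {K : Kernel ℝ ℝ} {fmin : ℝ}

lemma IsJumpKernel.iterK_div_le (hK : IsJumpKernel K p ν) (hp0 : 0 ≤ p) (hp1 : p ≤ 1)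
    (hν : ν ≪ volume) (hν1 : ν (Icc 0 1) = 1) (hfmin : 0 < fmin)
    (hlb : IsDensityLowerBoundOn ν fmin (Icc 0 1)) (b g : ℕ) (x : ℝ) {x₀ : ℝ}
    (hx₀ : x₀ ∈ Icc 0 1) :
    (iterK K g x {y | quant b y = quant b x₀}).toReal
        / (ν {y | quant b y = quant b x₀}).toReal
      ≤ 1 - (1 - p) ^ g + (1 - p) ^ g * 2 ^ b / fmin := by
  have hq : 0 ≤ 1 - p := by linarith
  rw [hK.toReal_iterK_apply hp0 hp1, ← div_div_eq_mul_div]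
  exact mul_add_one_sub_mul_div_le (by positivity) (pow_le_one₀ hq (by linarith))
    (ENNReal.toReal_le_of_le_ofReal zero_le_one (ENNReal.ofReal_one ▸ prob_le_one))
    (by positivity) (toReal_measure_setOf_quant_eq_quant_eq_zero_or_le hν hν1 hlb hx₀)

lemma IsJumpKernel.Psi1_le (hK : IsJumpKernel K p ν) (hp0 : 0 ≤ p) (hp1 : p ≤ 1)
    (hν : ν ≪ volume) (hν1 : ν (Icc 0 1) = 1) (hfmin : 0 < fmin)
    (hlb : IsDensityLowerBoundOn ν fmin (Icc 0 1)) (b g : ℕ) :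
    Psi1 K ν b g ≤ 1 - (1 - p) ^ g + (1 - p) ^ g * 2 ^ b / fmin := by
  have hqg : (1 - p) ^ g ≤ 1 := pow_le_one₀ (by linarith) (by linarith)
  have herr : 0 ≤ (1 - p) ^ g * 2 ^ b / fmin := by
    have : 0 ≤ 1 - p := by linarith
    positivity
  exact Psi1_le_of_forall_le (by linarith) fun x _ x₀ hx₀ =>
    hK.iterK_div_le hp0 hp1 hν hν1 hfmin hlb b g x hx₀

lemma IsJumpKernel.one_sub_pow_le_Psi1 (hK : IsJumpKernel K p ν) (hp0 : 0 ≤ p) (hp1 : p ≤ 1)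
    (hν : ν ≪ volume) (hν1 : ν (Icc 0 1) = 1) (hfmin : 0 < fmin)
    (hlb : IsDensityLowerBoundOn ν fmin (Icc 0 1)) (b g : ℕ) :
    1 - (1 - p) ^ g ≤ Psi1 K ν b g := by
  have h0 : (0 : ℝ) ∈ Icc 0 1 := ⟨le_rfl, zero_le_one⟩
  refine le_trans ?_ (le_Psi1_of_forall_le (fun x _ x₀ hx₀ =>
    hK.iterK_div_le hp0 hp1 hν hν1 hfmin hlb b g x hx₀) h0 h0)
  have hcell : fmin / 2 ^ b ≤ (ν {y | quant b y = quant b 0}).toReal :=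
    (ENNReal.ofReal_le_iff_le_toReal (measure_ne_top _ _)).mp
      (hlb.ofReal_le_measure_setOf_quant_eq_quant ⟨le_rfl, zero_lt_one⟩)
  rw [hK.toReal_iterK_apply hp0 hp1,
    Measure.dirac_apply_of_mem (show (0 : ℝ) ∈ {y | quant b y = quant b 0} from rfl),
    ENNReal.toReal_one, le_div_iff₀ ((by positivity : 0 < fmin / 2 ^ b).trans_le hcell)]
  linarith [pow_nonneg (by linarith : 0 ≤ 1 - p) g]

end JumpPsi1

lemma tendsto_pow_floor_mul_mul_two_pow_ceil {q γ : ℝ} (hq0 : 0 < q) (hq1 : q < 1)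
    (hγ : γ > -1 / Real.logb 2 q) {ι : Type*} {l : Filter ι} {A : ι → ℝ}
    (hA : Tendsto A l atTop) :
    Tendsto (fun i => q ^ ⌊γ * A i⌋₊ * 2 ^ ⌈A i⌉₊) l (nhds 0) := by
  have hlogq : Real.log q < 0 := Real.log_neg hq0 hq1
  have hslope : γ * Real.log q + Real.log 2 < 0 := by
    rw [gt_iff_lt, Real.logb, div_div_eq_mul_div, neg_one_mul, div_lt_iff_of_neg hlogq] at hγ
    linarith
  have hexp : ∀ i, q ^ ⌊γ * A i⌋₊ * 2 ^ ⌈A i⌉₊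
      = Real.exp (⌊γ * A i⌋₊ * Real.log q + ⌈A i⌉₊ * Real.log 2) := fun i => by
    rw [Real.exp_add, Real.exp_nat_mul, Real.exp_nat_mul, Real.exp_log hq0,
      Real.exp_log two_pos]
  simp_rw [hexp]
  refine Real.tendsto_exp_atBot.comp (tendsto_atBot_mono' _ ?_
    (tendsto_atBot_add_const_right _ (Real.log 2 - Real.log q)
      (hA.atTop_mul_const_of_neg hslope)))
  filter_upwards [hA.eventually_ge_atTop 0] with i hAi
  have hfloor := mul_le_mul_of_nonpos_right (Nat.sub_one_lt_floor (γ * A i)).le hlogq.le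
  have hceil :=
    mul_le_mul_of_nonneg_right (Nat.ceil_lt_add_one hAi).le (Real.log_pos one_lt_two).le
  linarith

theorem jump_markov_Psi1_bound_and_limit_general
    (p : ℝ) (hp : 0 < p) (hp1 : p < 1)
    (ν : Measure ℝ) [IsProbabilityMeasure ν] (hν : ν ≪ volume)
    (hν1 : ν (Set.Icc (0 : ℝ) 1) = 1)
    (fmin : ℝ) (hfmin : 0 < fmin)
    (hlb : ∀ s : Set ℝ, MeasurableSet s → s ⊆ Set.Icc (0 : ℝ) 1 →
      ENNReal.ofReal fmin * volume s ≤ ν s)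
    (K : Kernel ℝ ℝ)
    (hK : ∀ x : ℝ, K x = ENNReal.ofReal (1 - p) • Measure.dirac x
        + ENNReal.ofReal p • ν)
    (π : Measure ℝ) [IsProbabilityMeasure π]
    (hstat : π.bind (fun x => K x) = π) :
    (∀ b g : ℕ, Psi1 K π b g
        ≤ (1 - (1 - p) ^ g) + (1 - p) ^ g * 2 ^ b / fmin)
    ∧ ∀ (r γ : ℝ), 1 ≤ r → γ > -1 / Real.logb 2 (1 - p) →
        Tendsto (fun n : ℕ =>
            Psi1 K π ⌈r * Real.logb 2 (Real.logb 2 n)⌉₊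
              ⌊γ * (r * Real.logb 2 (Real.logb 2 n))⌋₊)
          atTop (nhds 1) := by
  have hK : IsJumpKernel K p ν := hK
  obtain rfl : π = ν := hK.eq_of_invariant hp hp1.le hstat
  have hupper := hK.Psi1_le hp.le hp1.le hν hν1 hfmin hlb
  refine ⟨hupper, fun r γ hr hγ => ?_⟩
  have hA : Tendsto (fun n : ℕ => r * Real.logb 2 (Real.logb 2 n)) atTop atTop :=
    (((Real.tendsto_logb_atTop one_lt_two).comp (Real.tendsto_logb_atTop one_lt_two)).comp
      tendsto_natCast_atTop_atTop).const_mul_atTop (by linarith)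
  have herr := tendsto_pow_floor_mul_mul_two_pow_ceil (by linarith) (by linarith) hγ hA
  have hstay : Tendsto (fun n : ℕ => (1 - p) ^ ⌊γ * (r * Real.logb 2 (Real.logb 2 n))⌋₊)
      atTop (nhds 0) :=
    squeeze_zero (fun n => pow_nonneg (by linarith) _)
      (fun n => le_mul_of_one_le_right (pow_nonneg (by linarith) _) (one_le_pow₀ one_le_two))
      herr
  exact tendsto_of_tendsto_of_tendsto_of_le_of_le (by simpa using hstay.const_sub 1)
    (by simpa using (hstay.const_sub 1).add (herr.div_const fmin))
    (fun n => hK.one_sub_pow_le_Psi1 hp.le hp1.le hν hν1 hfmin hlb _ _)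
    (fun n => hupper _ _)

/-- For the jump Markov chain with jump density bounded below by `f_min`,
`Ψ₁(b,g) ≤ (1−(1−p)^g) + (1−p)^g 2^b / f_min`; in particular with
`b_n = ⌈r log₂ log₂ n⌉`, `g_n = ⌊γ r log₂ log₂ n⌋`, `γ > −1/log₂(1−p)`,
`Ψ₁(b_n, g_n) → 1`. -/
theorem jump_markov_Psi1_bound_and_limit
    (p : ℝ) (hp : 0 < p) (hp1 : p < 1)
    (ν : Measure ℝ) [IsProbabilityMeasure ν] (hν : ν ≪ volume)
    (hν1 : ν (Set.Icc (0 : ℝ) 1) = 1)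
    (fmin : ℝ) (hfmin : 0 < fmin)
    (hlb : ∀ s : Set ℝ, MeasurableSet s → s ⊆ Set.Icc (0 : ℝ) 1 →
      ENNReal.ofReal fmin * volume s ≤ ν s)
    (K : Kernel ℝ ℝ)
    (hK : ∀ x : ℝ, K x = ENNReal.ofReal (1 - p) • Measure.dirac x
        + ENNReal.ofReal p • ν)
    (π : Measure ℝ) [IsProbabilityMeasure π] (hπ1 : π (Set.Icc (0 : ℝ) 1) = 1)
    (hstat : π.bind (fun x => K x) = π) :
    (∀ b g : ℕ, Psi1 K π b g
        ≤ (1 - (1 - p) ^ g) + (1 - p) ^ g * 2 ^ b / fmin)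
    ∧ ∀ (r γ : ℝ), 1 ≤ r → γ > -1 / Real.logb 2 (1 - p) →
        Tendsto (fun n : ℕ =>
            Psi1 K π ⌈r * Real.logb 2 (Real.logb 2 n)⌉₊
              ⌊γ * (r * Real.logb 2 (Real.logb 2 n))⌋₊)
          atTop (nhds 1) :=
  jump_markov_Psi1_bound_and_limit_general p hp hp1 ν hν hν1 fmin hfmin hlb K hK π hstat
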